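/- arXiv:2106.12489 — 2 statements merged into one kernel-verified Lean document; each statement's English description precedes it below -/
import Mathlib

section
/- Let τ > 0, y ∈ ℝ, and 0 < ε < min(√τ, τ/|y|) (with the convention that the second bound is vacuous when y = 0). Define f(x) = τ·log(|x| + ε) + (1/2)(x − y)². Set c₁ = |y| − ε and c₂ = c₁² − 4(τ − ε|y|). If c₂ ≤ 0, then x* = 0 is a local minimizer of f; if c₂ > 0, then x* = sign(y)·(c₁ + √c₂)/2 is a local minimizer of f. -/
/-!
At `0` the objective has a corner: its one-sided slopes are `±τ / ε - y`, so `ε * |y| < τ`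
makes `0` a local minimizer, quantitatively via `log (t + ε) - log ε ≥ t / (t + ε)`.
For `x > 0` the derivative is `(x² - c₁ x + (τ - ε |y|)) / (x + ε)` when `y > 0`; if `c₂ > 0`
its roots `0 < b < a` are real, and the derivative changes sign from negative to positive at
`a = (c₁ + √c₂) / 2`. The case `y < 0` follows from the symmetry `x ↦ -x`, `y ↦ -y`.
-/

open Filter Topology

namespace LogShrinkage

noncomputable def objective (τ ε y x : ℝ) : ℝ := τ * Real.log (|x| + ε) + (1 / 2) * (x - y) ^ 2

variable {τ ε y : ℝ}

theorem isLocalMin_objective_zero (hε : 0 < ε) (h : ε * |y| < τ) :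
    IsLocalMin (objective τ ε y) 0 := by
  have hτ : 0 < τ := lt_of_le_of_lt (by positivity) h
  have hnear : ∀ᶠ x in 𝓝 (0 : ℝ), |y| * (|x| + ε) < τ := by
    have hcont : ContinuousAt (fun x : ℝ => |y| * (|x| + ε)) 0 := by fun_prop
    exact hcont.eventually_lt continuousAt_const (by simpa [mul_comm] using h)
  filter_upwards [hnear] with x hx
  have hpos : 0 < |x| + ε := by positivity
  have hlog : |x| / (|x| + ε) ≤ Real.log (|x| + ε) - Real.log ε := by
    have := Real.one_sub_inv_le_log_of_pos (div_pos hpos hε)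
    rwa [Real.log_div hpos.ne' hε.ne', inv_div, one_sub_div hpos.ne', add_sub_cancel_right]
      at this
  have hgain : |y| * |x| ≤ τ * (|x| / (|x| + ε)) := by
    rw [mul_div_assoc', le_div_iff₀ hpos]
    nlinarith [abs_nonneg x]
  have hcross : x * y ≤ |x| * |y| := abs_mul x y ▸ le_abs_self _
  simp only [objective, abs_zero, zero_add, zero_sub, neg_sq]
  nlinarith [sq_nonneg x, mul_le_mul_of_nonneg_left hlog hτ.le]

theorem hasDerivAt_objective_of_pos {x : ℝ} (hx : 0 < x) (hxε : x + ε ≠ 0) :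
    HasDerivAt (objective τ ε y) (τ / (x + ε) + (x - y)) x := by
  have hsmooth : HasDerivAt (fun t => τ * Real.log (t + ε) + (1 / 2) * (t - y) ^ 2)
      (τ / (x + ε) + (x - y)) x := by
    have hlog := ((hasDerivAt_id x).add_const ε).log hxε
    have hsq := ((hasDerivAt_id x).sub_const y).fun_pow 2
    refine ((hlog.const_mul τ).fun_add (hsq.const_mul (1 / 2))).congr_deriv ?_
    simp only [id]
    ring
  have hlocal : (fun t => τ * Real.log (t + ε) + (1 / 2) * (t - y) ^ 2) =ᶠ[𝓝 x]
      objective τ ε y := by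
    filter_upwards [eventually_gt_nhds hx] with t ht
    rw [objective, abs_of_pos ht]
  exact hsmooth.congr_of_eventuallyEq hlocal.symm

theorem isLocalMin_objective_of_roots {a b : ℝ} (hε : 0 < ε) (hb : 0 < b) (hba : b < a)
    (hsum : a + b = y - ε) (hprod : a * b = τ - ε * y) :
    IsLocalMin (objective τ ε y) a := by
  have hderiv : ∀ x, 0 < x → HasDerivAt (objective τ ε y) ((x - a) * (x - b) / (x + ε)) x := by
    intro x hx
    convert hasDerivAt_objective_of_pos (y := y) hx (by positivity) using 1
    field_simp
    linear_combination hprod - x * hsum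
  have ha : 0 < a := hb.trans hba
  apply isLocalMin_of_deriv_Ioo hba (lt_add_one a) (hderiv a ha).continuousAt
  · exact fun x hx => (hderiv x (hb.trans hx.1)).differentiableAt.differentiableWithinAt
  · exact fun x hx => (hderiv x (ha.trans hx.1)).differentiableAt.differentiableWithinAt
  · intro x hx
    rw [(hderiv x (hb.trans hx.1)).deriv]
    exact div_nonpos_of_nonpos_of_nonneg (by nlinarith [hx.1, hx.2]) (by linarith [hx.1])
  · intro x hx
    rw [(hderiv x (ha.trans hx.1)).deriv]
    exact div_nonneg (by nlinarith [hx.1]) (by linarith [hx.1])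

theorem objective_abs_sign_mul (hy : y ≠ 0) (x : ℝ) :
    objective τ ε |y| (Real.sign y * x) = objective τ ε y x := by
  rcases hy.lt_or_gt with hy | hy
  · simp only [objective, Real.sign_of_neg hy, abs_of_neg hy, abs_neg, neg_one_mul]
    ring
  · simp [objective, Real.sign_of_pos hy, abs_of_pos hy]

theorem IsLocalMin.objective_sign_mul {a : ℝ} (hy : y ≠ 0)
    (h : IsLocalMin (objective τ ε |y|) a) :
    IsLocalMin (objective τ ε y) (Real.sign y * a) := by
  have hsign : Real.sign y * (Real.sign y * a) = a := by
    rcases hy.lt_or_gt with hy | hy <;> simp [Real.sign_of_neg, Real.sign_of_pos, hy]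
  rw [← hsign] at h
  have := h.comp_continuous (continuous_const_mul (Real.sign y)).continuousAt
  rwa [Function.comp_def, funext (objective_abs_sign_mul hy)] at this

end LogShrinkage

open LogShrinkage in
theorem log_shrinkage_local_min_general (τ ε y : ℝ) (hε : 0 < ε)
    (hε1 : ε < Real.sqrt τ) (hε2 : ε * |y| < τ)
    (f : ℝ → ℝ) (hf : ∀ x, f x = τ * Real.log (|x| + ε) + (1 / 2) * (x - y) ^ 2)
    (c₁ c₂ : ℝ) (hc₁ : c₁ = |y| - ε) (hc₂ : c₂ = c₁ ^ 2 - 4 * (τ - ε * |y|)) :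
    (c₂ ≤ 0 → IsLocalMin f 0) ∧
    (0 < c₂ → IsLocalMin f (Real.sign y * ((c₁ + Real.sqrt c₂) / 2))) := by
  obtain rfl : f = objective τ ε y := funext hf
  refine ⟨fun _ => isLocalMin_objective_zero hε hε2, fun hc₂pos => ?_⟩
  have hετ : ε ^ 2 < τ := (Real.lt_sqrt hε.le).mp hε1
  have hsqrt_sq : Real.sqrt c₂ ^ 2 = c₂ := Real.sq_sqrt hc₂pos.le
  have hsqrt_pos : 0 < Real.sqrt c₂ := Real.sqrt_pos.mpr hc₂pos
  have hc₁pos : 0 < c₁ := by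
    by_contra! h
    -- if `|y| ≤ ε` then `c₁ ^ 2 ≤ ε * (ε - |y|) < τ - ε * |y|`, so `c₂ < 0`
    nlinarith [mul_nonneg (show 0 ≤ ε - |y| by linarith) (abs_nonneg y)]
  have hy : y ≠ 0 := abs_pos.mp (by linarith)
  set a := (c₁ + Real.sqrt c₂) / 2 with ha_def
  set b := (c₁ - Real.sqrt c₂) / 2 with hb_def
  have hprod : a * b = τ - ε * |y| := by nlinarith
  have hb_pos : 0 < b := pos_of_mul_pos_right (a := a) (by linarith) (by linarith)
  refine (isLocalMin_objective_of_roots hε hb_pos ?_ ?_ hprod).objective_sign_mul hy <;> linarith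

theorem log_shrinkage_local_min (τ ε y : ℝ) (hτ : 0 < τ) (hε : 0 < ε)
    (hε1 : ε < Real.sqrt τ) (hε2 : ε * |y| < τ)
    (f : ℝ → ℝ) (hf : ∀ x, f x = τ * Real.log (|x| + ε) + (1 / 2) * (x - y) ^ 2)
    (c₁ c₂ : ℝ) (hc₁ : c₁ = |y| - ε) (hc₂ : c₂ = c₁ ^ 2 - 4 * (τ - ε * |y|)) :
    (c₂ ≤ 0 → IsLocalMin f 0) ∧
    (0 < c₂ → IsLocalMin f (Real.sign y * ((c₁ + Real.sqrt c₂) / 2))) :=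
  log_shrinkage_local_min_general τ ε y hε hε1 hε2 f hf c₁ c₂ hc₁ hc₂
end

section
/- Let Y ∈ ℂ^{m×n} have SVD Y = U·diag(σ₁,…,σ_r)·V^H and let λ > 0. Then X* = U·diag(max(σ₁ − λ, 0), …, max(σ_r − λ, 0))·V^H is the unique minimizer of λ‖X‖_* + (1/2)‖X − Y‖_F² over X ∈ ℂ^{m×n} (singular value thresholding). -/
open scoped ComplexOrder
open Matrix

/-- Singular values of a complex matrix: square roots of the eigenvalues of `Aᴴ * A`. -/
noncomputable def singularValues {m n : ℕ} (A : Matrix (Fin m) (Fin n) ℂ) : Fin n → ℝ :=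
  fun i => Real.sqrt ((Matrix.posSemidef_conjTranspose_mul_self A).isHermitian.eigenvalues i)

/-- Nuclear norm: sum of the singular values. -/
noncomputable def nuclearNorm {m n : ℕ} (A : Matrix (Fin m) (Fin n) ℂ) : ℝ :=
  ∑ i, singularValues A i

/-- Rectangular diagonal matrix built from a sequence of scalars. -/
def rectDiag (m n : ℕ) (σ : ℕ → ℝ) : Matrix (Fin m) (Fin n) ℂ :=
  Matrix.of fun i j => if (i : ℕ) = (j : ℕ) then ((σ (i : ℕ) : ℝ) : ℂ) else 0


/-!
Both terms of the objective are invariant under `X ↦ U X Vᴴ`, so we may take `Y` rectangular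
diagonal. For any `B`, the nuclear norm dominates the sum of the moduli of the diagonal entries:
write `B = (B W) Wᴴ` with `W` the unitary diagonalising `Bᴴ B`; the columns of `B W` have the
singular values as norms and those of `W` are unit vectors, so Cauchy–Schwarz applies. The
off-diagonal entries only add to the Frobenius distance, so the problem decouples into the scalar
problems `min_z λ|z| + ½|z - σᵢ|²`, each 1-strongly convex with minimiser `max (σᵢ - λ) 0`.
Summing gives `Φ X* + ½‖X - X*‖²_F ≤ Φ X`, which yields minimality and uniqueness at once.
-/

open Finset

namespace Matrix

variable {𝕜 : Type*} [RCLike 𝕜] {m n : Type*}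

theorem conjTranspose_mul_self_apply_self [Fintype m] (A : Matrix m n 𝕜) (k : n) :
    (Aᴴ * A) k k = ((∑ i, ‖A i k‖ ^ 2 : ℝ) : 𝕜) := by
  simp [mul_apply, RCLike.conj_mul]

theorem trace_conjTranspose_mul_self [Fintype m] [Fintype n] (A : Matrix m n 𝕜) :
    (Aᴴ * A).trace = ((∑ i, ∑ j, ‖A i j‖ ^ 2 : ℝ) : 𝕜) := by
  rw [Finset.sum_comm]
  simp [trace, conjTranspose_mul_self_apply_self]

theorem sum_norm_sq_eq_zero_iff [Fintype m] [Fintype n] (A : Matrix m n 𝕜) :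
    ∑ i, ∑ j, ‖A i j‖ ^ 2 = 0 ↔ A = 0 := by
  rw [← trace_conjTranspose_mul_self_eq_zero_iff, trace_conjTranspose_mul_self,
    RCLike.ofReal_eq_zero]

theorem conjTranspose_mul_self_unitary_mul_mul [Fintype m] [DecidableEq m] [Fintype n]
    (A : Matrix m n 𝕜) {U : Matrix m m 𝕜} (hU : U ∈ unitaryGroup m 𝕜) (V : Matrix n n 𝕜) :
    (U * A * Vᴴ)ᴴ * (U * A * Vᴴ) = V * (Aᴴ * A) * Vᴴ := by
  have hUU : Uᴴ * U = 1 := mem_unitaryGroup_iff'.mp hU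
  simp only [conjTranspose_mul, conjTranspose_conjTranspose, Matrix.mul_assoc]
  rw [← Matrix.mul_assoc Uᴴ, hUU, Matrix.one_mul]

theorem sum_norm_sq_unitary_mul_mul [Fintype m] [DecidableEq m] [Fintype n] [DecidableEq n]
    (A : Matrix m n 𝕜) {U : Matrix m m 𝕜} {V : Matrix n n 𝕜}
    (hU : U ∈ unitaryGroup m 𝕜) (hV : V ∈ unitaryGroup n 𝕜) :
    ∑ i, ∑ j, ‖(U * A * Vᴴ) i j‖ ^ 2 = ∑ i, ∑ j, ‖A i j‖ ^ 2 := by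
  have hVV : Vᴴ * V = 1 := mem_unitaryGroup_iff'.mp hV
  apply RCLike.ofReal_injective (K := 𝕜)
  rw [← trace_conjTranspose_mul_self, ← trace_conjTranspose_mul_self,
    conjTranspose_mul_self_unitary_mul_mul A hU, trace_mul_comm, ← Matrix.mul_assoc, hVV,
    Matrix.one_mul]

open Polynomial in
theorem IsHermitian.sum_comp_eigenvalues_of_charpoly_eq [Fintype n] [DecidableEq n]
    {M : Type*} [AddCommMonoid M] {A : Matrix n n 𝕜} (hA : A.IsHermitian) {d : n → ℝ}
    (h : A.charpoly = ∏ i, (X - C (d i : 𝕜))) (f : ℝ → M) :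
    ∑ i, f (hA.eigenvalues i) = ∑ i, f (d i) := by
  have hroots : univ.val.map (RCLike.ofReal ∘ hA.eigenvalues) =
      univ.val.map (fun i => (d i : 𝕜)) := by
    rw [← hA.roots_charpoly_eq_eigenvalues, h, Finset.prod_eq_multiset_prod,
      show univ.val.map (fun i => X - C (d i : 𝕜)) =
        (univ.val.map fun i => (d i : 𝕜)).map (fun a => X - C a) by rw [Multiset.map_map]; rfl,
      roots_multiset_prod_X_sub_C]
  have heig : univ.val.map hA.eigenvalues = univ.val.map d := by
    simpa [Multiset.map_map, Function.comp_def] using congrArg (Multiset.map RCLike.re) hroots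
  calc ∑ i, f (hA.eigenvalues i) = ((univ.val.map hA.eigenvalues).map f).sum := by
        rw [Multiset.map_map]; rfl
    _ = ∑ i, f (d i) := by rw [heig, Multiset.map_map]; rfl

end Matrix

theorem singularValues_unitary_mul_mul {m n : ℕ} (A : Matrix (Fin m) (Fin n) ℂ)
    {U : Matrix (Fin m) (Fin m) ℂ} {V : Matrix (Fin n) (Fin n) ℂ}
    (hU : U ∈ unitaryGroup (Fin m) ℂ) (hV : V ∈ unitaryGroup (Fin n) ℂ) :
    singularValues (U * A * Vᴴ) = singularValues A := by
  have hVV : Vᴴ * V = 1 := mem_unitaryGroup_iff'.mp hV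
  have hcharpoly : ((U * A * Vᴴ)ᴴ * (U * A * Vᴴ)).charpoly = (Aᴴ * A).charpoly := by
    rw [conjTranspose_mul_self_unitary_mul_mul A hU, charpoly_mul_comm, ← Matrix.mul_assoc, hVV,
      Matrix.one_mul]
  unfold singularValues
  rw [(IsHermitian.eigenvalues_eq_eigenvalues_iff _ _).mpr hcharpoly]

theorem nuclearNorm_unitary_mul_mul {m n : ℕ} (A : Matrix (Fin m) (Fin n) ℂ)
    {U : Matrix (Fin m) (Fin m) ℂ} {V : Matrix (Fin n) (Fin n) ℂ}
    (hU : U ∈ unitaryGroup (Fin m) ℂ) (hV : V ∈ unitaryGroup (Fin n) ℂ) :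
    nuclearNorm (U * A * Vᴴ) = nuclearNorm A := by
  rw [nuclearNorm, singularValues_unitary_mul_mul A hU hV, nuclearNorm]

theorem Fin.sum_ite_val_eq {M : Type*} [AddCommMonoid M] {m : ℕ} (t : ℕ) (f : Fin m → M) :
    (∑ i : Fin m, if (i : ℕ) = t then f i else 0) = if h : t < m then f ⟨t, h⟩ else 0 := by
  split_ifs with h
  · simp_rw [← Fin.ext_iff (b := ⟨t, h⟩)]
    simp
  · exact Finset.sum_eq_zero fun i _ => if_neg (by omega)

theorem conjTranspose_rectDiag_mul_rectDiag (m n : ℕ) (d : ℕ → ℝ) :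
    (rectDiag m n d)ᴴ * rectDiag m n d =
      diagonal fun j : Fin n => ((if (j : ℕ) < m then d j ^ 2 else 0 : ℝ) : ℂ) := by
  ext j k
  simp only [mul_apply, conjTranspose_apply, rectDiag, of_apply, diagonal_apply]
  have hterm : ∀ i : Fin m, star (if (i : ℕ) = j then (d i : ℂ) else 0) *
      (if (i : ℕ) = k then (d i : ℂ) else 0) =
      if (i : ℕ) = j then (if j = k then ((d j ^ 2 : ℝ) : ℂ) else 0) else 0 := by
    intro i
    by_cases hij : (i : ℕ) = j
    · by_cases hjk : j = k
      · simp [hij, hjk, sq]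
      · simp [hij, hjk, Fin.val_ne_of_ne hjk]
    · simp [hij]
  simp only [hterm, Fin.sum_ite_val_eq]
  split_ifs <;> simp_all

theorem nuclearNorm_rectDiag {m n : ℕ} {d : ℕ → ℝ} (hd : ∀ i, 0 ≤ d i) :
    nuclearNorm (rectDiag m n d) = ∑ i, ∑ j, ‖rectDiag m n d i j‖ := by
  unfold nuclearNorm singularValues
  rw [IsHermitian.sum_comp_eigenvalues_of_charpoly_eq _
    (d := fun j : Fin n => if (j : ℕ) < m then d j ^ 2 else 0)
    (by rw [conjTranspose_rectDiag_mul_rectDiag, charpoly_diagonal]; rfl) Real.sqrt,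
    Finset.sum_comm]
  refine Finset.sum_congr rfl fun j _ => ?_
  simp only [rectDiag, of_apply, apply_ite norm, norm_zero, Complex.norm_real, Real.norm_eq_abs]
  rw [Fin.sum_ite_val_eq]
  split_ifs <;> simp [Real.sqrt_sq (hd _), abs_of_nonneg (hd _)]

theorem Finset.sum_comp_le_univ_sum_of_injOn {ι κ : Type*} [Fintype κ] [DecidableEq κ]
    {s : Finset ι} {π : ι → κ} (hπ : Set.InjOn π s) {f : κ → ℝ} (hf : ∀ k, 0 ≤ f k) :
    ∑ i ∈ s, f (π i) ≤ ∑ k, f k := by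
  rw [← Finset.sum_image hπ]
  exact Finset.sum_le_univ_sum_of_nonneg hf

theorem Finset.sum_mul_le_sqrt_mul_sqrt_of_injOn {α β : Type*} [Fintype α] [DecidableEq α]
    [Fintype β] [DecidableEq β] {s : Finset (α × β)} (h₁ : Set.InjOn Prod.fst (s : Set (α × β)))
    (h₂ : Set.InjOn Prod.snd (s : Set (α × β))) (f : α → ℝ) (g : β → ℝ) :
    ∑ p ∈ s, f p.1 * g p.2 ≤ √(∑ a, f a ^ 2) * √(∑ b, g b ^ 2) :=
  calc ∑ p ∈ s, f p.1 * g p.2 ≤ √(∑ p ∈ s, f p.1 ^ 2) * √(∑ p ∈ s, g p.2 ^ 2) :=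
        Real.sum_mul_le_sqrt_mul_sqrt s _ _
    _ ≤ √(∑ a, f a ^ 2) * √(∑ b, g b ^ 2) := by
        gcongr
        · exact Finset.sum_comp_le_univ_sum_of_injOn h₁ fun _ => sq_nonneg _
        · exact Finset.sum_comp_le_univ_sum_of_injOn h₂ fun _ => sq_nonneg _

theorem sum_norm_le_nuclearNorm {m n : ℕ} (B : Matrix (Fin m) (Fin n) ℂ)
    {s : Finset (Fin m × Fin n)} (h₁ : Set.InjOn Prod.fst (s : Set (Fin m × Fin n)))
    (h₂ : Set.InjOn Prod.snd (s : Set (Fin m × Fin n))) :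
    ∑ p ∈ s, ‖B p.1 p.2‖ ≤ nuclearNorm B := by
  have hH := (posSemidef_conjTranspose_mul_self B).isHermitian
  set W : Matrix (Fin n) (Fin n) ℂ := (hH.eigenvectorUnitary : Matrix (Fin n) (Fin n) ℂ)
  have hW : W ∈ unitaryGroup (Fin n) ℂ := hH.eigenvectorUnitary.2
  have hcolW : ∀ k, ∑ j, ‖W j k‖ ^ 2 = 1 := fun k => by
    have := conjTranspose_mul_self_apply_self W k
    rw [← star_eq_conjTranspose, mem_unitaryGroup_iff'.mp hW, one_apply_eq,
      ← RCLike.ofReal_one, RCLike.ofReal_inj] at this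
    exact this.symm
  have hcolBW : ∀ k, ∑ i, ‖(B * W) i k‖ ^ 2 = hH.eigenvalues k := fun k => by
    have hdiag : (B * W)ᴴ * (B * W) = diagonal (RCLike.ofReal ∘ hH.eigenvalues) := by
      rw [← hH.conjStarAlgAut_star_eigenvectorUnitary, Unitary.conjStarAlgAut_star_apply,
        conjTranspose_mul, star_eq_conjTranspose]
      simp only [W, Matrix.mul_assoc]
    have := conjTranspose_mul_self_apply_self (B * W) k
    rw [hdiag, diagonal_apply_eq, Function.comp_apply, RCLike.ofReal_inj] at this
    exact this.symm
  have hBW : B * W * Wᴴ = B := by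
    rw [Matrix.mul_assoc, ← star_eq_conjTranspose, mem_unitaryGroup_iff.mp hW, Matrix.mul_one]
  have hentry : ∀ i j, ‖B i j‖ ≤ ∑ k, ‖(B * W) i k‖ * ‖W j k‖ := fun i j =>
    calc ‖B i j‖ = ‖(B * W * Wᴴ) i j‖ := by rw [hBW]
      _ = ‖∑ k, (B * W) i k * star (W j k)‖ := by simp only [mul_apply, conjTranspose_apply]
      _ ≤ ∑ k, ‖(B * W) i k‖ * ‖W j k‖ := (norm_sum_le _ _).trans_eq (by simp)
  calc ∑ p ∈ s, ‖B p.1 p.2‖ ≤ ∑ p ∈ s, ∑ k, ‖(B * W) p.1 k‖ * ‖W p.2 k‖ :=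
        Finset.sum_le_sum fun p _ => hentry _ _
    _ = ∑ k, ∑ p ∈ s, ‖(B * W) p.1 k‖ * ‖W p.2 k‖ := Finset.sum_comm
    _ ≤ ∑ k, √(∑ i, ‖(B * W) i k‖ ^ 2) * √(∑ j, ‖W j k‖ ^ 2) :=
        Finset.sum_le_sum fun k _ => Finset.sum_mul_le_sqrt_mul_sqrt_of_injOn h₁ h₂
          (fun i => ‖(B * W) i k‖) (fun j => ‖W j k‖)
    _ = nuclearNorm B := by simp [hcolW, hcolBW, nuclearNorm, singularValues]

theorem sum_norm_diag_le_nuclearNorm {m n : ℕ} (B : Matrix (Fin m) (Fin n) ℂ) :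
    ∑ i : Fin m, ∑ j : Fin n, (if (i : ℕ) = j then ‖B i j‖ else 0) ≤ nuclearNorm B := by
  have hinj : ∀ (p q : Fin m × Fin n), (p.1 : ℕ) = p.2 → (q.1 : ℕ) = q.2 →
      ((p.1 : ℕ) = q.1 ∨ (p.2 : ℕ) = q.2) → p = q := by
    rintro ⟨i, j⟩ ⟨i', j'⟩ hp hq h
    simp only [Prod.mk.injEq, Fin.ext_iff] at *
    omega
  have := sum_norm_le_nuclearNorm B (s := univ.filter fun p => (p.1 : ℕ) = p.2)
    (fun p hp q hq h => hinj p q (by simpa using hp) (by simpa using hq) (.inl (by rw [h])))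
    (fun p hp q hq h => hinj p q (by simpa using hp) (by simpa using hq) (.inr (by rw [h])))
  rwa [Finset.sum_filter, Fintype.sum_prod_type] at this

theorem soft_threshold_gap {lam s : ℝ} (hlam : 0 ≤ lam) (hs : 0 ≤ s) (z : ℂ) :
    lam * ‖((max (s - lam) 0 : ℝ) : ℂ)‖ + (1 / 2) * ‖((max (s - lam) 0 : ℝ) : ℂ) - s‖ ^ 2
      + (1 / 2) * ‖z - ((max (s - lam) 0 : ℝ) : ℂ)‖ ^ 2 ≤ lam * ‖z‖ + (1 / 2) * ‖z - s‖ ^ 2 := by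
  have hnorm_sub : ∀ a : ℝ, ‖z - a‖ ^ 2 = ‖z‖ ^ 2 - 2 * a * z.re + a ^ 2 := fun a => by
    rw [Complex.sq_norm, Complex.sq_norm, Complex.normSq_apply, Complex.normSq_apply]
    simp only [Complex.sub_re, Complex.sub_im, Complex.ofReal_re, Complex.ofReal_im]
    ring
  have hre : z.re ≤ ‖z‖ := Complex.re_le_norm z
  rw [← Complex.ofReal_sub, Complex.norm_real, Complex.norm_real, Real.norm_eq_abs,
    Real.norm_eq_abs, hnorm_sub, hnorm_sub, sq_abs]
  rcases le_total s lam with h | h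
  · rw [max_eq_right (by linarith), abs_zero]
    nlinarith [norm_nonneg z]
  · rw [max_eq_left (by linarith), abs_of_nonneg (by linarith)]
    nlinarith

noncomputable def svtObjective {m n : ℕ} (lam : ℝ) (Y X : Matrix (Fin m) (Fin n) ℂ) : ℝ :=
  lam * nuclearNorm X + (1 / 2) * ∑ i, ∑ j, ‖X i j - Y i j‖ ^ 2

theorem svtObjective_unitary_mul_mul {m n : ℕ} (lam : ℝ) (Y X : Matrix (Fin m) (Fin n) ℂ)
    {U : Matrix (Fin m) (Fin m) ℂ} {V : Matrix (Fin n) (Fin n) ℂ}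
    (hU : U ∈ unitaryGroup (Fin m) ℂ) (hV : V ∈ unitaryGroup (Fin n) ℂ) :
    svtObjective lam (U * Y * Vᴴ) (U * X * Vᴴ) = svtObjective lam Y X := by
  have hdist := sum_norm_sq_unitary_mul_mul (X - Y) hU hV
  simp only [Matrix.mul_sub, Matrix.sub_mul, Matrix.sub_apply] at hdist
  rw [svtObjective, svtObjective, nuclearNorm_unitary_mul_mul X hU hV, hdist]

theorem svtObjective_rectDiag_entry_le {m n : ℕ} {lam : ℝ} (hlam : 0 ≤ lam) {σ : ℕ → ℝ}
    (hσ : ∀ i, 0 ≤ σ i) (i : Fin m) (j : Fin n) (z : ℂ) :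
    lam * ‖rectDiag m n (fun k => max (σ k - lam) 0) i j‖
      + (1 / 2) * ‖rectDiag m n (fun k => max (σ k - lam) 0) i j - rectDiag m n σ i j‖ ^ 2
      + (1 / 2) * ‖z - rectDiag m n (fun k => max (σ k - lam) 0) i j‖ ^ 2
    ≤ lam * (if (i : ℕ) = j then ‖z‖ else 0) + (1 / 2) * ‖z - rectDiag m n σ i j‖ ^ 2 := by
  by_cases h : (i : ℕ) = j
  · simpa [rectDiag, h] using soft_threshold_gap hlam (hσ i) z
  · simp [rectDiag, h]

theorem svtObjective_rectDiag_add_le {m n : ℕ} {lam : ℝ} (hlam : 0 ≤ lam) {σ : ℕ → ℝ}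
    (hσ : ∀ i, 0 ≤ σ i) (B : Matrix (Fin m) (Fin n) ℂ) :
    svtObjective lam (rectDiag m n σ) (rectDiag m n fun k => max (σ k - lam) 0)
      + (1 / 2) * ∑ i, ∑ j, ‖B i j - rectDiag m n (fun k => max (σ k - lam) 0) i j‖ ^ 2
    ≤ svtObjective lam (rectDiag m n σ) B := by
  set D := rectDiag m n σ
  set T := rectDiag m n fun k => max (σ k - lam) 0
  calc _ = ∑ i : Fin m, ∑ j : Fin n, (lam * ‖T i j‖ + (1 / 2) * ‖T i j - D i j‖ ^ 2
          + (1 / 2) * ‖B i j - T i j‖ ^ 2) := by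
        rw [svtObjective, nuclearNorm_rectDiag fun k => le_max_right _ _]
        simp only [Finset.mul_sum, Finset.sum_add_distrib, T]
    _ ≤ ∑ i : Fin m, ∑ j : Fin n, (lam * (if (i : ℕ) = j then ‖B i j‖ else 0)
          + (1 / 2) * ‖B i j - D i j‖ ^ 2) :=
        Finset.sum_le_sum fun i _ => Finset.sum_le_sum fun j _ =>
          svtObjective_rectDiag_entry_le hlam hσ i j (B i j)
    _ = lam * ∑ i : Fin m, ∑ j : Fin n, (if (i : ℕ) = j then ‖B i j‖ else 0)
          + (1 / 2) * ∑ i, ∑ j, ‖B i j - D i j‖ ^ 2 := by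
        simp only [Finset.mul_sum, Finset.sum_add_distrib]
    _ ≤ svtObjective lam D B := by
        rw [svtObjective]
        gcongr
        exact sum_norm_diag_le_nuclearNorm B

theorem svtObjective_add_le {m n : ℕ} {lam : ℝ} (hlam : 0 ≤ lam)
    {U : Matrix (Fin m) (Fin m) ℂ} {V : Matrix (Fin n) (Fin n) ℂ}
    (hU : U ∈ unitaryGroup (Fin m) ℂ) (hV : V ∈ unitaryGroup (Fin n) ℂ)
    {σ : ℕ → ℝ} (hσ : ∀ i, 0 ≤ σ i) (X : Matrix (Fin m) (Fin n) ℂ) :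
    svtObjective lam (U * rectDiag m n σ * Vᴴ)
        (U * rectDiag m n (fun k => max (σ k - lam) 0) * Vᴴ)
      + (1 / 2) * ∑ i, ∑ j,
        ‖X i j - (U * rectDiag m n (fun k => max (σ k - lam) 0) * Vᴴ) i j‖ ^ 2
    ≤ svtObjective lam (U * rectDiag m n σ * Vᴴ) X := by
  obtain ⟨B, rfl⟩ : ∃ B, X = U * B * Vᴴ := ⟨Uᴴ * X * V, by
    rw [← Matrix.mul_assoc, ← Matrix.mul_assoc, ← star_eq_conjTranspose,
      mem_unitaryGroup_iff.mp hU, Matrix.one_mul, Matrix.mul_assoc, ← star_eq_conjTranspose,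
      mem_unitaryGroup_iff.mp hV, Matrix.mul_one]⟩
  have hdist := sum_norm_sq_unitary_mul_mul (B - rectDiag m n fun k => max (σ k - lam) 0) hU hV
  simp only [Matrix.mul_sub, Matrix.sub_mul, Matrix.sub_apply] at hdist
  rw [svtObjective_unitary_mul_mul _ _ _ hU hV, svtObjective_unitary_mul_mul _ _ _ hU hV, hdist]
  exact svtObjective_rectDiag_add_le hlam hσ B

theorem singular_value_thresholding {m n : ℕ} (lam : ℝ) (hlam : 0 < lam)
    (Y : Matrix (Fin m) (Fin n) ℂ)
    (U : Matrix (Fin m) (Fin m) ℂ) (V : Matrix (Fin n) (Fin n) ℂ)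
    (hU : U ∈ Matrix.unitaryGroup (Fin m) ℂ) (hV : V ∈ Matrix.unitaryGroup (Fin n) ℂ)
    (σ : ℕ → ℝ) (hσ : ∀ i, 0 ≤ σ i)
    (hY : Y = U * rectDiag m n σ * Vᴴ)
    (Xstar : Matrix (Fin m) (Fin n) ℂ)
    (hX : Xstar = U * rectDiag m n (fun i => max (σ i - lam) 0) * Vᴴ)
    (Φ : Matrix (Fin m) (Fin n) ℂ → ℝ)
    (hΦ : ∀ X, Φ X = lam * nuclearNorm X +
      (1 / 2) * ∑ i, ∑ j, ‖X i j - Y i j‖ ^ 2) :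
    (∀ X, Φ Xstar ≤ Φ X) ∧ (∀ X, Φ X = Φ Xstar → X = Xstar) := by
  obtain rfl : Φ = svtObjective lam Y := funext hΦ
  have hgap : ∀ X, svtObjective lam Y Xstar + (1 / 2) * ∑ i, ∑ j, ‖X i j - Xstar i j‖ ^ 2
      ≤ svtObjective lam Y X := by
    subst hY hX
    exact svtObjective_add_le hlam.le hU hV hσ
  have hdist_nonneg : ∀ X : Matrix (Fin m) (Fin n) ℂ, 0 ≤ ∑ i, ∑ j, ‖X i j - Xstar i j‖ ^ 2 :=
    fun X => by positivity
  refine ⟨fun X => by linarith [hgap X, hdist_nonneg X], fun X hX => ?_⟩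
  have hzero := le_antisymm (by linarith [hgap X]) (hdist_nonneg X)
  exact sub_eq_zero.mp ((sum_norm_sq_eq_zero_iff _).mp hzero)
end
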